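/- Define q:ℤ≥0→ℤ≥0 by q(0)=0, q(j)=⌊φj⌋+1 if j∈A, and q(j)=⌊(φ−1)j⌋ if j∈B. Then q is a well-defined bijection of the set of non-negative integers onto itself, and the map j↦q(j)−j is a bijection from the set of non-negative integers onto the set ℤ of all integers (i.e., every integer appears exactly once in the sequence (q(j)−j), j=0,1,2,…). -/

import Mathlib

/-- The golden ratio φ = (1 + √5)/2. -/
noncomputable def phi : ℝ := (1 + Real.sqrt 5) / 2

/-- The lower Wythoff sequence a(n) = ⌊nφ⌋. -/
noncomputable def wa (n : ℕ) : ℕ := ⌊(n : ℝ) * phi⌋₊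

/-- The upper Wythoff sequence b(n) = ⌊nφ²⌋. -/
noncomputable def wb (n : ℕ) : ℕ := ⌊(n : ℝ) * phi ^ 2⌋₊

/-- A = range of the lower Wythoff sequence. -/
def WA : Set ℕ := {m | ∃ n : ℕ, 0 < n ∧ wa n = m}

/-- B = range of the upper Wythoff sequence. -/
def WB : Set ℕ := {m | ∃ n : ℕ, 0 < n ∧ wb n = m}

open scoped Classical in
/-- q(0) = 0, q(j) = ⌊φj⌋+1 if j ∈ A, q(j) = ⌊(φ−1)j⌋ if j ∈ B. -/
noncomputable def q (j : ℕ) : ℕ :=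
  if j = 0 then 0
  else if j ∈ WA then wa j + 1
  else ⌊(phi - 1) * (j : ℝ)⌋₊

/-!
Put `θ = nφ - a(n)`, which lies in `(0, 1)` because `φ` is irrational. From `φ² = φ + 1` one
gets `b(n) = a(n) + n`, `a(n) φ = b(n) - θ (φ - 1)` and `(φ - 1) b(n) = a(n) + θ (2 - φ)`, with
both error terms in `(0, 1)`; hence `q(a(n)) = b(n)` and `q(b(n)) = a(n)`, using that `b(n) ∉ A`
by Rayleigh's theorem (`1/φ + 1/φ² = 1`). So `q` is an involution swapping `a(n)` and `b(n)`, and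
`q(j) - j` is `n` at `j = a(n)` and `-n` at `j = b(n)`. Every `j` is some `a(n)` or `b(n)` (with
`a(0) = b(0) = 0`), so `k ↦ a(k)` for `k ≥ 0` and `k ↦ b(-k)` for `k < 0` inverts `j ↦ q(j) - j`.
-/

open Real
open scoped symmDiff

lemma one_lt_phi : 1 < phi := one_lt_goldenRatio

lemma phi_lt_two : phi < 2 := goldenRatio_lt_two

lemma phi_pos : 0 < phi := goldenRatio_pos

lemma phi_sq : phi ^ 2 = phi + 1 := goldenRatio_sq

lemma irrational_phi : Irrational phi := goldenRatio_irrational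

lemma phi_holderConjugate_phi_sq : phi.HolderConjugate (phi ^ 2) := by
  rw [holderConjugate_iff_eq_conjExponent one_lt_phi, eq_div_iff (sub_pos.mpr one_lt_phi).ne']
  linear_combination phi * phi_sq

section Floor

variable {R : Type*} [CommRing R] [LinearOrder R] [IsStrictOrderedRing R] [FloorSemiring R]

lemma Nat.floor_natCast_add_of_lt_one {k : ℕ} {t : R} (ht₀ : 0 ≤ t) (ht₁ : t < 1) :
    ⌊(k : R) + t⌋₊ = k := by
  rw [add_comm, Nat.floor_add_natCast ht₀, Nat.floor_eq_zero.mpr ht₁, zero_add]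

lemma Nat.floor_natCast_sub_add_one {k : ℕ} {t : R} (hk : 0 < k) (ht₀ : 0 < t)
    (ht₁ : t ≤ 1) : ⌊(k : R) - t⌋₊ + 1 = k := by
  obtain ⟨m, rfl⟩ := Nat.exists_eq_add_of_lt hk
  rw [show ((0 + m + 1 : ℕ) : R) - t = m + (1 - t) by push_cast; ring,
    Nat.floor_natCast_add_of_lt_one (by linarith) (by linarith), zero_add]

end Floor

lemma natCast_mem_beattySeq_pos_iff {r : ℝ} (hr : 0 ≤ r) (j : ℕ) :
    (j : ℤ) ∈ {beattySeq r k | k > 0} ↔ ∃ n : ℕ, 0 < n ∧ ⌊(n : ℝ) * r⌋₊ = j := by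
  constructor
  · rintro ⟨k, hk, hkj⟩
    lift k to ℕ using hk.le
    refine ⟨k, by exact_mod_cast hk, ?_⟩
    rw [beattySeq, Int.cast_natCast, ← Int.natCast_floor_eq_floor (by positivity)] at hkj
    exact_mod_cast hkj
  · rintro ⟨n, hn, rfl⟩
    refine ⟨n, by exact_mod_cast hn, ?_⟩
    rw [beattySeq, Int.cast_natCast, Int.natCast_floor_eq_floor (by positivity)]

lemma mem_WA_symmDiff_WB_iff (j : ℕ) : j ∈ WA ∆ WB ↔ 0 < j := by
  have rayleigh := irrational_phi.beattySeq_symmDiff_beattySeq_pos phi_holderConjugate_phi_sq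
  have hA : j ∈ WA ↔ _ := (natCast_mem_beattySeq_pos_iff phi_pos.le j).symm
  have hB : j ∈ WB ↔ _ := (natCast_mem_beattySeq_pos_iff (sq_nonneg phi) j).symm
  rw [Set.mem_symmDiff, hA, hB, ← Set.mem_symmDiff, rayleigh, Set.mem_ofPred_eq, Nat.cast_pos]

lemma wb_eq_wa_add (n : ℕ) : wb n = wa n + n := by
  rw [wa, wb, phi_sq, mul_add, mul_one, Nat.floor_add_natCast (mul_nonneg n.cast_nonneg phi_pos.le)]

lemma wa_pos {n : ℕ} (hn : 0 < n) : 0 < wa n := by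
  rw [wa, Nat.floor_pos]
  exact one_le_mul_of_one_le_of_one_le (by exact_mod_cast hn) one_lt_phi.le

lemma wb_pos {n : ℕ} (hn : 0 < n) : 0 < wb n := by
  rw [wb_eq_wa_add]; omega

lemma mul_phi_sub_wa_mem_Ioo {n : ℕ} (hn : 0 < n) : (n : ℝ) * phi - wa n ∈ Set.Ioo 0 1 := by
  have hfloor : (wa n : ℝ) ≠ n * phi :=
    ((irrational_phi.natCast_mul hn.ne').ne_nat (wa n)).symm
  constructor
  · exact sub_pos.mpr ((Nat.floor_le (mul_nonneg n.cast_nonneg phi_pos.le)).lt_of_ne hfloor)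
  · rw [sub_lt_iff_lt_add']
    exact Nat.lt_floor_add_one _

lemma wa_mul_phi (n : ℕ) : (wa n : ℝ) * phi = ↑(wa n + n) - (n * phi - wa n) * (phi - 1) := by
  push_cast
  linear_combination (n : ℝ) * phi_sq

lemma phi_sub_one_mul_wb (n : ℕ) : (phi - 1) * wb n = wa n + (n * phi - wa n) * (2 - phi) := by
  rw [wb_eq_wa_add]
  push_cast
  linear_combination (n : ℝ) * phi_sq

lemma wa_wa_add_one {n : ℕ} (hn : 0 < n) : wa (wa n) + 1 = wb n := by
  obtain ⟨h₀, h₁⟩ := mul_phi_sub_wa_mem_Ioo hn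
  rw [wa, wa_mul_phi, wb_eq_wa_add]
  refine Nat.floor_natCast_sub_add_one (by omega) ?_ ?_
  · exact mul_pos h₀ (by linarith [one_lt_phi])
  · exact (mul_lt_one_of_nonneg_of_lt_one_left h₀.le h₁ (by linarith [phi_lt_two])).le

lemma floor_phi_sub_one_mul_wb {n : ℕ} (hn : 0 < n) : ⌊(phi - 1) * wb n⌋₊ = wa n := by
  obtain ⟨h₀, h₁⟩ := mul_phi_sub_wa_mem_Ioo hn
  rw [phi_sub_one_mul_wb]
  refine Nat.floor_natCast_add_of_lt_one ?_ ?_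
  · exact (mul_pos h₀ (by linarith [phi_lt_two])).le
  · exact mul_lt_one_of_nonneg_of_lt_one_left h₀.le h₁ (by linarith [one_lt_phi])

lemma exists_wa_eq_or_wb_eq (j : ℕ) : ∃ n, wa n = j ∨ wb n = j := by
  rcases j.eq_zero_or_pos with rfl | hj
  · exact ⟨0, .inl (by simp [wa])⟩
  obtain ⟨⟨n, -, hn⟩, -⟩ | ⟨⟨n, -, hn⟩, -⟩ := (mem_WA_symmDiff_WB_iff j).2 hj
  exacts [⟨n, .inl hn⟩, ⟨n, .inr hn⟩]

lemma q_wa (n : ℕ) : q (wa n) = wb n := by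
  rcases n.eq_zero_or_pos with rfl | hn
  · simp [q, wa, wb]
  rw [q, if_neg (wa_pos hn).ne', if_pos ⟨n, hn, rfl⟩, wa_wa_add_one hn]

lemma q_wb (n : ℕ) : q (wb n) = wa n := by
  rcases n.eq_zero_or_pos with rfl | hn
  · simp [q, wa, wb]
  have hB : wb n ∈ WB := ⟨n, hn, rfl⟩
  have hA : wb n ∉ WA := fun hA ↦ by
    simpa [Set.mem_symmDiff, hA, hB] using (mem_WA_symmDiff_WB_iff _).2 (wb_pos hn)
  rw [q, if_neg (wb_pos hn).ne', if_neg hA, floor_phi_sub_one_mul_wb hn]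

lemma q_involutive : Function.Involutive q := by
  intro j
  obtain ⟨n, rfl | rfl⟩ := exists_wa_eq_or_wb_eq j
  · rw [q_wa, q_wb]
  · rw [q_wb, q_wa]

lemma q_wa_sub_wa (n : ℕ) : (q (wa n) : ℤ) - wa n = n := by
  rw [q_wa, wb_eq_wa_add]; push_cast; ring

lemma q_wb_sub_wb (n : ℕ) : (q (wb n) : ℤ) - wb n = -n := by
  rw [q_wb, wb_eq_wa_add]; push_cast; ring

noncomputable def wythoffOfInt (k : ℤ) : ℕ :=
  if 0 ≤ k then wa k.toNat else wb (-k).toNat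

lemma wythoffOfInt_natCast (n : ℕ) : wythoffOfInt n = wa n := by
  simp [wythoffOfInt]

lemma wythoffOfInt_neg_natCast (n : ℕ) : wythoffOfInt (-n) = wb n := by
  rcases n.eq_zero_or_pos with rfl | hn
  · simp [wythoffOfInt, wa, wb]
  simp [wythoffOfInt, hn.ne']

lemma wythoffOfInt_q_sub_self (j : ℕ) : wythoffOfInt ((q j : ℤ) - j) = j := by
  obtain ⟨n, rfl | rfl⟩ := exists_wa_eq_or_wb_eq j
  · rw [q_wa_sub_wa, wythoffOfInt_natCast]
  · rw [q_wb_sub_wb, wythoffOfInt_neg_natCast]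

lemma q_wythoffOfInt_sub_self (k : ℤ) : (q (wythoffOfInt k) : ℤ) - wythoffOfInt k = k := by
  obtain ⟨n, rfl | rfl⟩ := k.eq_nat_or_neg
  · rw [wythoffOfInt_natCast, q_wa_sub_wa]
  · rw [wythoffOfInt_neg_natCast, q_wb_sub_wb]

theorem stmt_15 :
    Function.Bijective q ∧
    Function.Bijective (fun j : ℕ => (q j : ℤ) - (j : ℤ)) :=
  ⟨q_involutive.bijective, Function.bijective_iff_has_inverse.mpr
    ⟨wythoffOfInt, wythoffOfInt_q_sub_self, q_wythoffOfInt_sub_self⟩⟩
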